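/- For integers n and k with n ≥ k ≥ 4, let M_{n,k} be the graph with vertex set {a_1, …, a_n} ∪ {x_1, …, x_k}, where the a_i span a complete graph K_n, each x_i (1 ≤ i ≤ k) is adjacent exactly to a_i, and there are no other edges. Then there is no commutative semigroup S with zero such that Γ(S) is isomorphic to M_{n,k}. -/

import Mathlib

universe u v w
/-- A commutative semigroup with a zero element `0` satisfying `0 * a = 0`. -/
class CommSemigroupWithZero (S : Type u) extends CommSemigroup S, Zero S where
  zero_mul' : ∀ a : S, 0 * a = 0

/-- The zero-divisor graph of `S`, as a simple graph on all of `S`: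
distinct nonzero `x, y` are adjacent iff `x * y = 0`.  (The element `0` and the
non-zero-divisors are isolated vertices, so adjacency, end vertices and cycles
are exactly those of `Γ(S)`.) -/
def zdGraph (S : Type u) [CommSemigroupWithZero S] : SimpleGraph S where
  Adj x y := x ≠ y ∧ x * y = 0 ∧ x ≠ 0 ∧ y ≠ 0
  symm := by
    constructor
    rintro x y ⟨h1, h2, h3, h4⟩
    exact ⟨h1.symm, by rwa [mul_comm], h4, h3⟩
  loopless := ⟨fun x h => h.1 rfl⟩

/-- `x` is a vertex of `Γ(S)`: a nonzero zero-divisor. -/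
def IsVertex (S : Type u) [CommSemigroupWithZero S] (x : S) : Prop :=
  x ≠ 0 ∧ ∃ y : S, y ≠ 0 ∧ x * y = 0

/-- `x` is an end vertex of `Γ(S)`: it has exactly one neighbour. -/
def IsEndVertex (S : Type u) [CommSemigroupWithZero S] (x : S) : Prop :=
  ∃! y : S, (zdGraph S).Adj x y
/-- The zero-divisor graph of `S` on its vertex set (the nonzero zero-divisors). -/
def zdvGraph (S : Type u) [CommSemigroupWithZero S] :
    SimpleGraph {x : S // x ≠ 0 ∧ ∃ y : S, y ≠ 0 ∧ x * y = 0} where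
  Adj a b := a ≠ b ∧ (a : S) * (b : S) = 0
  symm := by
    constructor
    rintro a b ⟨h1, h2⟩
    exact ⟨h1.symm, by rwa [mul_comm]⟩
  loopless := ⟨fun a h => h.1 rfl⟩

/-- `G` is (isomorphic to) the zero-divisor graph of some commutative semigroup with zero. -/
def IsZDGraphOf {α : Type v} (G : SimpleGraph α) : Prop :=
  ∃ (S : Type u) (inst : CommSemigroupWithZero S), Nonempty ((@zdvGraph S inst) ≃g G)

/-- The graph `M_{n,k}` : a complete graph on `a_1, …, a_n` (the `Sum.inl` vertices)
together with end vertices `x_1, …, x_k` (the `Sum.inr` vertices), where `x_i` is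
adjacent exactly to `a_i`. -/
def Mgraph (n k : ℕ) : SimpleGraph (Fin n ⊕ Fin k) where
  Adj x y :=
    match x, y with
    | Sum.inl i, Sum.inl j => i ≠ j
    | Sum.inl i, Sum.inr j => (i : ℕ) = (j : ℕ)
    | Sum.inr j, Sum.inl i => (i : ℕ) = (j : ℕ)
    | Sum.inr _, Sum.inr _ => False
  symm := by
    constructor
    rintro (i | i) (j | j) h
    · exact h.symm
    · exact h
    · exact h
    · exact h.elim
  loopless := by
    constructor
    rintro (i | i) h
    · exact h rfl
    · exact h

/-!
Let `a_i, x_j` be the elements of `S` corresponding to the vertices of `M_{n,k}`. For `i ≠ j`,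
`x_i a_j` is nonzero and annihilates `x_j`, so it is `x_j` or `a_j`; it cannot be `x_j`, since then
`x_j a_i = x_i a_j a_i = 0`. Hence `x_i a_j = a_j`. Now `c = x_0 x_1` is nonzero and kills `a_0`
and `a_1`, so `c = a_m` for some `m`; but `c a_2 = a_2 ≠ 0` and `c a_3 = a_3 ≠ 0` force `m = 2`
and `m = 3`.
-/

instance CommSemigroupWithZero.toSemigroupWithZero (S : Type u) [CommSemigroupWithZero S] :
    SemigroupWithZero S where
  zero_mul := CommSemigroupWithZero.zero_mul'
  mul_zero a := by rw [mul_comm]; exact CommSemigroupWithZero.zero_mul' a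

namespace zdvGraph

variable {S : Type u} [CommSemigroupWithZero S] {α : Type v} {G : SimpleGraph α}
  (f : G ≃g zdvGraph S)

theorem coe_mul_coe_eq_zero_iff {u v : α} (huv : u ≠ v) :
    (f u : S) * f v = 0 ↔ G.Adj u v := by
  rw [← f.map_adj_iff]
  exact (and_iff_right (f.injective.ne huv)).symm

theorem exists_coe_eq_of_mul_eq_zero {s : S} (hs : s ≠ 0) {v : α} (h : s * f v = 0) :
    ∃ u, (f u : S) = s ∧ (u = v ∨ G.Adj u v) := by
  set u := f.symm ⟨s, hs, f v, (f v).2.1, h⟩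
  have hu : (f u : S) = s := by simp [u]
  refine ⟨u, hu, or_iff_not_imp_left.2 fun huv => ?_⟩
  exact (coe_mul_coe_eq_zero_iff f huv).1 (hu ▸ h)

end zdvGraph

namespace Mgraph

variable {n k : ℕ}

@[simp]
theorem adj_inl_inl {i j : Fin n} : (Mgraph n k).Adj (.inl i) (.inl j) ↔ i ≠ j := Iff.rfl

@[simp]
theorem adj_inl_inr {i : Fin n} {j : Fin k} : (Mgraph n k).Adj (.inl i) (.inr j) ↔ (i : ℕ) = j :=
  Iff.rfl

@[simp]
theorem adj_inr_inl {i : Fin n} {j : Fin k} : (Mgraph n k).Adj (.inr j) (.inl i) ↔ (i : ℕ) = j :=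
  Iff.rfl

@[simp]
theorem not_adj_inr_inr {i j : Fin k} : ¬ (Mgraph n k).Adj (.inr i) (.inr j) := id

variable {S : Type u} [CommSemigroupWithZero S] (f : Mgraph n k ≃g zdvGraph S)

theorem inl_mul_inl {i j : Fin n} (hij : i ≠ j) : (f (.inl i) : S) * f (.inl j) = 0 :=
  (zdvGraph.coe_mul_coe_eq_zero_iff f (Sum.inl_injective.ne hij)).2 hij

theorem inr_mul_inl_castLE (hn : k ≤ n) (j : Fin k) :
    (f (.inr j) : S) * f (.inl (Fin.castLE hn j)) = 0 :=
  (zdvGraph.coe_mul_coe_eq_zero_iff f Sum.inr_ne_inl).2 rfl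

theorem inr_mul_inl_ne_zero {i : Fin n} {j : Fin k} (hij : (i : ℕ) ≠ j) :
    (f (.inr j) : S) * f (.inl i) ≠ 0 :=
  fun h => hij ((zdvGraph.coe_mul_coe_eq_zero_iff f Sum.inr_ne_inl).1 h)

theorem inr_mul_inr_ne_zero {i j : Fin k} (hij : i ≠ j) : (f (.inr i) : S) * f (.inr j) ≠ 0 :=
  fun h => not_adj_inr_inr ((zdvGraph.coe_mul_coe_eq_zero_iff f (Sum.inr_injective.ne hij)).1 h)

theorem eq_of_mul_inr_eq_zero (hn : k ≤ n) {s : S} (hs : s ≠ 0) {j : Fin k}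
    (h : s * f (.inr j) = 0) : s = f (.inr j) ∨ s = f (.inl (Fin.castLE hn j)) := by
  obtain ⟨u, rfl, hu⟩ := zdvGraph.exists_coe_eq_of_mul_eq_zero f hs h
  rcases u with i | l
  · have hi : i = Fin.castLE hn j := Fin.ext <| by simpa using hu
    exact .inr (hi ▸ rfl)
  · simp only [Sum.inr.injEq, not_adj_inr_inr, or_false] at hu
    exact .inl (hu ▸ rfl)

theorem exists_eq_inl_of_mul_eq_zero {s : S} (hs : s ≠ 0) {i i' : Fin n} (hii' : i ≠ i')
    (h : s * f (.inl i) = 0) (h' : s * f (.inl i') = 0) : ∃ m, s = f (.inl m) := by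
  obtain ⟨u, rfl, hu⟩ := zdvGraph.exists_coe_eq_of_mul_eq_zero f hs h
  obtain ⟨u', hu'u, hu'⟩ := zdvGraph.exists_coe_eq_of_mul_eq_zero f hs h'
  obtain rfl : u = u' := f.injective (Subtype.ext hu'u.symm)
  rcases u with m | l
  · exact ⟨m, rfl⟩
  · simp only [reduceCtorEq, adj_inr_inl, false_or] at hu hu'
    exact absurd (Fin.ext (hu.trans hu'.symm)) hii'

theorem eq_of_inl_mul_inl_eq_self {m i : Fin n} (h : (f (.inl m) : S) * f (.inl i) = f (.inl i)) :
    m = i := by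
  by_contra hmi
  exact (f (.inl i)).2.1 (h ▸ inl_mul_inl f hmi)

theorem inr_mul_inl_castLE_of_ne (hn : k ≤ n) {i j : Fin k} (hij : i ≠ j) :
    (f (.inr i) : S) * f (.inl (Fin.castLE hn j)) = f (.inl (Fin.castLE hn j)) := by
  have hcast : ∀ {a b : Fin k}, a ≠ b → ((Fin.castLE hn b : Fin n) : ℕ) ≠ a :=
    fun hab h => hab (Fin.ext h).symm
  have hkills : (f (.inr i) : S) * f (.inl (Fin.castLE hn j)) * f (.inr j) = 0 := by
    rw [mul_assoc, mul_comm (f (.inl _) : S), inr_mul_inl_castLE, mul_zero]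
  refine (eq_of_mul_inr_eq_zero f hn (inr_mul_inl_ne_zero f (hcast hij)) hkills).resolve_left
    fun hx => inr_mul_inl_ne_zero f (hcast (Ne.symm hij)) ?_
  have hji : Fin.castLE hn j ≠ Fin.castLE hn i := (Fin.castLE_injective hn).ne (Ne.symm hij)
  rw [← hx, mul_assoc, inl_mul_inl f hji, mul_zero]

theorem exists_inr_mul_inr_eq_inl (hn : k ≤ n) {i j : Fin k} (hij : i ≠ j) :
    ∃ m, (f (.inr i) : S) * f (.inr j) = f (.inl m) := by
  refine exists_eq_inl_of_mul_eq_zero f (inr_mul_inr_ne_zero f hij)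
    ((Fin.castLE_injective hn).ne hij) ?_ ?_
  · rw [mul_right_comm, inr_mul_inl_castLE, zero_mul]
  · rw [mul_assoc, inr_mul_inl_castLE, mul_zero]

theorem inr_mul_inr_mul_inl_castLE (hn : k ≤ n) {i j l : Fin k} (hil : i ≠ l) (hjl : j ≠ l) :
    (f (.inr i) : S) * f (.inr j) * f (.inl (Fin.castLE hn l)) = f (.inl (Fin.castLE hn l)) := by
  rw [mul_assoc, inr_mul_inl_castLE_of_ne f hn hjl, inr_mul_inl_castLE_of_ne f hn hil]

end Mgraph

theorem stmt4 (n k : ℕ) (hk : 4 ≤ k) (hn : k ≤ n) : ¬ IsZDGraphOf (Mgraph n k) := by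
  rintro ⟨S, _, ⟨e⟩⟩
  let ι : Fin 4 → Fin k := Fin.castLE hk
  have hι : ∀ {a b : Fin 4}, a ≠ b → ι a ≠ ι b := (Fin.castLE_injective hk).ne
  obtain ⟨m, hm⟩ := Mgraph.exists_inr_mul_inr_eq_inl e.symm hn (hι (by decide : (0 : Fin 4) ≠ 1))
  have fixes : ∀ l : Fin 4, l ≠ 0 → l ≠ 1 → m = Fin.castLE hn (ι l) := fun l h0 h1 =>
    Mgraph.eq_of_inl_mul_inl_eq_self e.symm <|
      hm ▸ Mgraph.inr_mul_inr_mul_inl_castLE e.symm hn (hι (Ne.symm h0)) (hι (Ne.symm h1))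
  have h23 : Fin.castLE hn (ι 2) = Fin.castLE hn (ι 3) :=
    (fixes 2 (by decide) (by decide)).symm.trans (fixes 3 (by decide) (by decide))
  exact hι (by decide : (2 : Fin 4) ≠ 3) (Fin.castLE_injective hn h23)
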